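/- arXiv:1009.0944 — 6 statements merged into one kernel-verified Lean document; each statement's English description precedes it below -/
import Mathlib

section
/- Let λ > 1/2. Then there exists a constant C₂ > 0 such that for all a, b ∈ ℝ, ∑_{n∈ℤ} 1 / ⟨n² + a n + b⟩^{λ} ≤ C₂. -/
/-- Write `⟨x⟩ = 1 + |x|`. -/
noncomputable def jap (x : ℝ) : ℝ := 1 + |x|

section aux

variable {lam : ℝ}

lemma aux_summable (hlam : 1 / 2 < lam) :
    Summable (fun k : ℤ => ((1 + (k : ℝ) ^ 2) ^ lam)⁻¹) := by
  have h2 : 1 < 2 * lam := by linarith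
  have hg : Summable (fun k : ℤ =>
      (if k = 0 then (1:ℝ) else 0) + |(k : ℝ)| ^ (-(2 * lam))) := by
    refine (summable_of_ne_finset_zero (s := {0}) ?_).add
      (Real.summable_abs_int_rpow h2)
    intro k hk
    simp only [Finset.mem_singleton] at hk
    simp [hk]
  have hnn : ∀ k : ℤ, 0 ≤ ((1 + (k:ℝ)^2) ^ lam)⁻¹ :=
    fun k => inv_nonneg.mpr (Real.rpow_nonneg (by positivity) _)
  refine hg.of_nonneg_of_le hnn (fun k => ?_)
  by_cases hk : k = 0
  · subst hk
    simp
    exact Real.rpow_nonneg le_rfl _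
  · have hk' : (k:ℝ) ≠ 0 := by exact_mod_cast hk
    have h1 : (1:ℝ) ≤ |(k:ℝ)| := by
      have h := Int.one_le_abs (by exact_mod_cast hk : k ≠ 0)
      have : ((1:ℤ):ℝ) ≤ ((|k|:ℤ):ℝ) := by exact_mod_cast h
      simpa [Int.cast_abs] using this
    have hsq : |(k:ℝ)| ^ (((2:ℕ):ℝ)) = (k:ℝ)^2 := by
      rw [Real.rpow_natCast, sq_abs]
    have hle : |(k:ℝ)| ^ (2*lam) ≤ (1 + (k:ℝ)^2) ^ lam := by
      have heq : |(k:ℝ)| ^ (2*lam) = ((k:ℝ)^2) ^ lam := by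
        rw [show (2:ℝ) * lam = ((2:ℕ):ℝ) * lam by norm_num,
          Real.rpow_mul (abs_nonneg _), hsq]
      rw [heq]
      exact Real.rpow_le_rpow (by positivity) (by nlinarith) (by linarith)
    have hpos : (0:ℝ) < |(k:ℝ)| ^ (2*lam) :=
      Real.rpow_pos_of_pos (by positivity) _
    rw [if_neg hk, zero_add, Real.rpow_neg (abs_nonneg _)]
    exact inv_anti₀ hpos hle

lemma aux_shift (β : ℝ) (n : ℤ) :
    (1 + ((n - round (-β) : ℤ) : ℝ) ^ 2) / 4 ≤ 1 + ((n : ℝ) + β) ^ 2 := by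
  set m : ℤ := round (-β) with hm
  have he : |(-β) - (m : ℝ)| ≤ 1 / 2 := abs_sub_round _
  set e : ℝ := (m : ℝ) + β with hedef
  have habs : |e| ≤ 1 / 2 := by
    rw [hedef]
    rw [abs_sub_comm] at he
    calc |(m:ℝ) + β| = |(m:ℝ) - (-β)| := by ring_nf
      _ ≤ 1/2 := he
  have he2 : e ^ 2 ≤ 1 / 4 := by
    obtain ⟨h1', h2'⟩ := abs_le.mp habs
    nlinarith [mul_nonneg (by linarith : (0:ℝ) ≤ 1/2 - e) (by linarith : (0:ℝ) ≤ 1/2 + e)]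
  set k : ℝ := ((n - m : ℤ) : ℝ) with hk
  have hnk : (n : ℝ) + β = k + e := by push_cast [hk, hedef]; ring
  rw [hnk]
  nlinarith [sq_nonneg (3 * k + 4 * e)]

lemma aux_min (t r : ℝ) :
    (t - r) ^ 2 = (|t| - r) ^ 2 ∨ (t + r) ^ 2 = (|t| - r) ^ 2 := by
  rcases abs_cases t with ⟨h, _⟩ | ⟨h, _⟩
  · left; rw [h]
  · right; rw [h]; ring

lemma aux_sq (t d : ℝ) :
    (|t| - Real.sqrt (max (-d) 0)) ^ 2 ≤ |t ^ 2 + d| := by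
  set r := Real.sqrt (max (-d) 0) with hrdef
  have hr : 0 ≤ r := Real.sqrt_nonneg _
  by_cases hd : 0 ≤ d
  · have hr0 : r = 0 := by
      rw [hrdef, Real.sqrt_eq_zero']
      exact max_le (by linarith) le_rfl
    rw [hr0, sub_zero, sq_abs, abs_of_nonneg (by positivity)]
    linarith
  · have hr2 : r ^ 2 = -d := by
      rw [hrdef, sq, Real.mul_self_sqrt (le_max_right _ _), max_eq_left (by linarith)]
    have key : |t ^ 2 + d| = |(|t| - r)| * (|t| + r) := by
      have h1 : t ^ 2 + d = (|t| - r) * (|t| + r) := by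
        have := hr2
        rw [← sq_abs t]; nlinarith
      rw [h1, abs_mul]
      congr 1
      exact abs_of_nonneg (add_nonneg (abs_nonneg t) hr)
    rw [key]
    have h1 : |(|t| - r)| ≤ |t| + r := by
      rcases abs_cases (|t| - r) with ⟨h, _⟩ | ⟨h, _⟩ <;> rw [h]
      · linarith
      · linarith [abs_nonneg t]
    calc (|t| - r) ^ 2 = |(|t| - r)| * |(|t| - r)| := by
          rw [← sq_abs (|t| - r)]; ring
      _ ≤ |(|t| - r)| * (|t| + r) := mul_le_mul_of_nonneg_left h1 (abs_nonneg _)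
end aux

lemma aux_main {lam : ℝ} (hlam : 1 / 2 < lam) (X β : ℝ) (n : ℤ)
    (hX : 1 + ((n : ℝ) + β) ^ 2 ≤ jap X) :
    1 / jap X ^ lam ≤ 4 ^ lam * ((1 + ((n - round (-β) : ℤ) : ℝ) ^ 2) ^ lam)⁻¹ := by
  have hlam0 : (0:ℝ) ≤ lam := by linarith
  set k : ℝ := ((n - round (-β) : ℤ) : ℝ) with hk
  have h1 : (1 + k ^ 2) / 4 ≤ jap X := le_trans (aux_shift β n) hX
  have hk0 : (0:ℝ) < 1 + k ^ 2 := by positivity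
  have h2 : ((1 + k ^ 2) / 4) ^ lam ≤ jap X ^ lam :=
    Real.rpow_le_rpow (by positivity) h1 hlam0
  have h3 : ((1 + k ^ 2) / 4) ^ lam = (1 + k ^ 2) ^ lam / 4 ^ lam :=
    Real.div_rpow (le_of_lt hk0) (by norm_num : (0:ℝ) ≤ 4) lam
  have h5 : (0:ℝ) < ((1 + k ^ 2) / 4) ^ lam := Real.rpow_pos_of_pos (by positivity) _
  have h6 : (jap X ^ lam)⁻¹ ≤ (((1 + k ^ 2) / 4) ^ lam)⁻¹ := inv_anti₀ h5 h2
  rw [one_div]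
  calc (jap X ^ lam)⁻¹ ≤ (((1 + k ^ 2) / 4) ^ lam)⁻¹ := h6
    _ = 4 ^ lam * ((1 + k ^ 2) ^ lam)⁻¹ := by
        rw [h3, inv_div, div_eq_mul_inv]

set_option maxHeartbeats 1000000 in
/-- Calculus lemma (b): for `λ > 1/2` there is `C₂ > 0` such that for all `a b : ℝ`,
`∑_{n ∈ ℤ} 1 / ⟨n² + a n + b⟩^λ ≤ C₂`. -/
theorem calculus_lemma_b (lam : ℝ) (hlam : 1 / 2 < lam) :
    ∃ C₂ > 0, ∀ a b : ℝ,
      (∑' n : ℤ, 1 / jap ((n : ℝ) ^ 2 + a * (n : ℝ) + b) ^ lam) ≤ C₂ := by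
  have hlam0 : (0:ℝ) ≤ lam := by linarith
  set h : ℤ → ℝ := fun k => ((1 + (k : ℝ) ^ 2) ^ lam)⁻¹ with hh
  have hS : Summable h := aux_summable hlam
  have hhnn : ∀ k : ℤ, 0 ≤ h k :=
    fun k => inv_nonneg.mpr (Real.rpow_nonneg (by positivity) _)
  set S : ℝ := ∑' k, h k with hSdef
  have hS0 : 0 ≤ S := tsum_nonneg hhnn
  have h4 : (0:ℝ) < (4:ℝ) ^ lam := Real.rpow_pos_of_pos (by norm_num) _
  refine ⟨2 * 4 ^ lam * S + 1, by positivity, fun a b => ?_⟩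
  set c : ℝ := a / 2 with hc
  set d : ℝ := b - a ^ 2 / 4 with hd
  set r : ℝ := Real.sqrt (max (-d) 0) with hr
  set m₁ : ℤ := round (-(c - r)) with hm1
  set m₂ : ℤ := round (-(c + r)) with hm2
  have hsum1 : Summable (fun n : ℤ => h (n - m₁)) :=
    (Equiv.subRight m₁).summable_iff.mpr hS
  have hsum2 : Summable (fun n : ℤ => h (n - m₂)) :=
    (Equiv.subRight m₂).summable_iff.mpr hS
  have hg : Summable (fun n : ℤ => (4:ℝ) ^ lam * (h (n - m₁) + h (n - m₂))) :=
    (hsum1.add hsum2).mul_left _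
  have key : ∀ n : ℤ, 1 / jap ((n : ℝ) ^ 2 + a * (n : ℝ) + b) ^ lam ≤
      (4:ℝ) ^ lam * (h (n - m₁) + h (n - m₂)) := by
    intro n
    set t : ℝ := (n : ℝ) + c with ht
    have hx : (n : ℝ) ^ 2 + a * (n : ℝ) + b = t ^ 2 + d := by
      rw [ht, hc, hd]; ring
    have hj : 1 + (|t| - r) ^ 2 ≤ jap ((n : ℝ) ^ 2 + a * (n : ℝ) + b) := by
      rw [hx]
      unfold jap
      linarith [aux_sq t d]
    rcases aux_min t r with hcase | hcase
    · have hX : 1 + ((n : ℝ) + (c - r)) ^ 2 ≤ jap ((n : ℝ) ^ 2 + a * (n : ℝ) + b) := by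
        have he : (n : ℝ) + (c - r) = t - r := by rw [ht]; ring
        rw [he, hcase]; exact hj
      have hmain := aux_main hlam _ (c - r) n hX
      rw [← hm1] at hmain
      refine le_trans hmain ?_
      simp only [hh]
      exact mul_le_mul_of_nonneg_left (le_add_of_nonneg_right (hhnn (n - m₂))) (le_of_lt h4)
    · have hX : 1 + ((n : ℝ) + (c + r)) ^ 2 ≤ jap ((n : ℝ) ^ 2 + a * (n : ℝ) + b) := by
        have he : (n : ℝ) + (c + r) = t + r := by rw [ht]; ring
        rw [he, hcase]; exact hj
      have hmain := aux_main hlam _ (c + r) n hX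
      rw [← hm2] at hmain
      refine le_trans hmain ?_
      simp only [hh]
      exact mul_le_mul_of_nonneg_left (le_add_of_nonneg_left (hhnn (n - m₁))) (le_of_lt h4)
  have hf : Summable (fun n : ℤ => 1 / jap ((n : ℝ) ^ 2 + a * (n : ℝ) + b) ^ lam) := by
    refine hg.of_nonneg_of_le (fun n => ?_) key
    have : (0:ℝ) < jap ((n : ℝ) ^ 2 + a * (n : ℝ) + b) := by unfold jap; positivity
    positivity
  have e1 : (∑' n : ℤ, h (n - m₁)) = S := (Equiv.subRight m₁).tsum_eq h
  have e2 : (∑' n : ℤ, h (n - m₂)) = S := (Equiv.subRight m₂).tsum_eq h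
  calc (∑' n : ℤ, 1 / jap ((n : ℝ) ^ 2 + a * (n : ℝ) + b) ^ lam)
      ≤ ∑' n : ℤ, (4:ℝ) ^ lam * (h (n - m₁) + h (n - m₂)) := Summable.tsum_le_tsum key hf hg
    _ = (4:ℝ) ^ lam * ((∑' n : ℤ, h (n - m₁)) + ∑' n : ℤ, h (n - m₂)) := by
        rw [tsum_mul_left, Summable.tsum_add hsum1 hsum2]
    _ = 2 * 4 ^ lam * S := by rw [e1, e2]; ring
    _ ≤ 2 * 4 ^ lam * S + 1 := by linarith
end

section
/- Let β ∈ ℝ and let u : ℝ × ℝ → ℂ, v : ℝ × ℝ → ℝ be C^∞ functions, each 1-periodic in the space variable x, satisfying the Benney system i u_t + u_{xx} = u v + β |u|² u and v_t = (|u|²)_x at every point. Then the momentum-type functional E₃[u(·,t), v(·,t)] = ∫₀¹ [ v(x,t)² + 2 Im( u(x,t) · conj(u_x(x,t)) ) ] dx is constant in t. -/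
open MeasureTheory
set_option maxRecDepth 8000

section helpers

variable {E : Type*} [NormedAddCommGroup E] [NormedSpace ℝ E]

private lemma hdFst (H : ℝ × ℝ → E) (hH : ContDiff ℝ (⊤ : ℕ∞) H) (x t : ℝ) :
    HasDerivAt (fun y => H (y, t)) (fderiv ℝ H (x, t) (1, 0)) x := by
  have hd : HasFDerivAt H (fderiv ℝ H (x, t)) (x, t) :=
    (hH.differentiable (by simp) (x, t)).hasFDerivAt
  have hline : HasDerivAt (fun y : ℝ => ((y, t) : ℝ × ℝ)) ((1 : ℝ), (0 : ℝ)) x :=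
    (hasDerivAt_id x).prodMk (hasDerivAt_const x t)
  exact hd.comp_hasDerivAt x hline

private lemma hdSnd (H : ℝ × ℝ → E) (hH : ContDiff ℝ (⊤ : ℕ∞) H) (x t : ℝ) :
    HasDerivAt (fun s => H (x, s)) (fderiv ℝ H (x, t) (0, 1)) t := by
  have hd : HasFDerivAt H (fderiv ℝ H (x, t)) (x, t) :=
    (hH.differentiable (by simp) (x, t)).hasFDerivAt
  have hline : HasDerivAt (fun s : ℝ => ((x, s) : ℝ × ℝ)) ((0 : ℝ), (1 : ℝ)) t :=
    (hasDerivAt_const t x).prodMk (hasDerivAt_id t)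
  exact hd.comp_hasDerivAt t hline

private lemma contDiffPd (H : ℝ × ℝ → E) (hH : ContDiff ℝ (⊤ : ℕ∞) H) (w : ℝ × ℝ) :
    ContDiff ℝ (⊤ : ℕ∞) (fun p => fderiv ℝ H p w) := by
  have h1 : ContDiff ℝ (⊤ : ℕ∞) (fderiv ℝ H) := hH.fderiv_right (by simp)
  exact (ContinuousLinearMap.apply ℝ E w).contDiff.comp h1

private lemma fderivPd (H : ℝ × ℝ → E) (hH : ContDiff ℝ (⊤ : ℕ∞) H) (p : ℝ × ℝ) (w w' : ℝ × ℝ) :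
    fderiv ℝ (fun q => fderiv ℝ H q w) p w' = fderiv ℝ (fderiv ℝ H) p w' w := by
  have hfd : HasFDerivAt (fderiv ℝ H) (fderiv ℝ (fderiv ℝ H) p) p :=
    (((hH.fderiv_right (m := (⊤ : ℕ∞)) (by simp)).differentiable (by simp)) p).hasFDerivAt
  have : HasFDerivAt (fun q => fderiv ℝ H q w)
      ((ContinuousLinearMap.apply ℝ E w).comp (fderiv ℝ (fderiv ℝ H) p)) p :=
    (ContinuousLinearMap.apply ℝ E w).hasFDerivAt.comp p hfd
  rw [this.fderiv]; rfl

private lemma pdComm (H : ℝ × ℝ → E) (hH : ContDiff ℝ (⊤ : ℕ∞) H) (p : ℝ × ℝ) :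
    fderiv ℝ (fun q => fderiv ℝ H q (1, 0)) p (0, 1)
      = fderiv ℝ (fun q => fderiv ℝ H q (0, 1)) p (1, 0) := by
  have hs : IsSymmSndFDerivAt ℝ H p := hH.contDiffAt.isSymmSndFDerivAt (by rw [minSmoothness_of_isRCLikeNormedField]; exact WithTop.coe_le_coe.mpr (le_top : (2 : ℕ∞) ≤ ⊤))
  rw [fderivPd H hH p _ _, fderivPd H hH p _ _]
  exact hs _ _

private lemma benneyAlg (β vv vt : ℝ) (a b c d e : ℂ)
    (h1 : Complex.I * d + c = a * (vv : ℂ) + (β : ℂ) * (‖a‖ : ℂ) ^ 2 * a)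
    (h2 : vt = 2 * ((starRingEnd ℂ) a * b).re) :
    2 * vv * vt + 2 * (d * (starRingEnd ℂ) b + a * (starRingEnd ℂ) e).im
      = 2 * ((starRingEnd ℂ) c * b + (starRingEnd ℂ) b * c).re
        - 2 * β * ((starRingEnd ℂ) a * a).re
            * ((starRingEnd ℂ) b * a + (starRingEnd ℂ) a * b).re
        + 2 * (b * (starRingEnd ℂ) d + a * (starRingEnd ℂ) e).im := by
  have hnorm : ((‖a‖ : ℂ)) ^ 2 = ((a.re ^ 2 + a.im ^ 2 : ℝ) : ℂ) := by
    norm_cast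
    rw [Complex.sq_norm, Complex.normSq_apply]; ring
  rw [hnorm] at h1
  have hd : d = -Complex.I * (a * (vv : ℂ) + ((a.re ^ 2 + a.im ^ 2 : ℝ) : ℂ) * (β : ℂ) * a - c) := by
    linear_combination -Complex.I * h1 + d * Complex.I_sq
  subst h2
  rw [hd]
  simp [Complex.ext_iff, Complex.mul_re, Complex.mul_im, Complex.add_re, Complex.add_im,
    Complex.ofReal_re, Complex.ofReal_im, pow_two]
  ring

end helpers

/-- Conservation of the momentum-type functional
`E₃[u,v] = ∫₀¹ [ v² + 2 Im(u ⋅ conj(u_x)) ] dx` for smooth spatially 1-periodic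
solutions of the periodic Benney system
`i u_t + u_{xx} = u v + β |u|² u`, `v_t = (|u|²)_x`. -/
theorem benney_momentum_conservation (β : ℝ) (u : ℝ → ℝ → ℂ) (v : ℝ → ℝ → ℝ)
    (hu_smooth : ContDiff ℝ (⊤ : ℕ∞) (Function.uncurry u))
    (hv_smooth : ContDiff ℝ (⊤ : ℕ∞) (Function.uncurry v))
    (hu_per : ∀ x t, u (x + 1) t = u x t)
    (hv_per : ∀ x t, v (x + 1) t = v x t)
    (heq1 : ∀ x t,
      Complex.I * deriv (fun s => u x s) t
        + deriv (fun y => deriv (fun z => u z t) y) x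
      = u x t * (v x t : ℂ) + (β : ℂ) * (‖u x t‖ : ℂ) ^ 2 * u x t)
    (heq2 : ∀ x t,
      deriv (fun s => v x s) t = deriv (fun y => ‖u y t‖ ^ 2) x) :
    ∀ t : ℝ,
      (∫ x in (0:ℝ)..1,
        ((v x t) ^ 2 + 2 * (u x t * (starRingEnd ℂ) (deriv (fun y => u y t) x)).im))
      = ∫ x in (0:ℝ)..1,
        ((v x 0) ^ 2 + 2 * (u x 0 * (starRingEnd ℂ) (deriv (fun y => u y 0) x)).im) := by
  intro T
  set F : ℝ × ℝ → ℂ := Function.uncurry u with hFdef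
  set V : ℝ × ℝ → ℝ := Function.uncurry v with hVdef
  have hFsm : ContDiff ℝ (⊤ : ℕ∞) F := hu_smooth
  have hVsm : ContDiff ℝ (⊤ : ℕ∞) V := hv_smooth
  set ux : ℝ × ℝ → ℂ := fun p => fderiv ℝ F p (1, 0) with huxdef
  set ut : ℝ × ℝ → ℂ := fun p => fderiv ℝ F p (0, 1) with hutdef
  have huxsm : ContDiff ℝ (⊤ : ℕ∞) ux := contDiffPd F hFsm _
  have hutsm : ContDiff ℝ (⊤ : ℕ∞) ut := contDiffPd F hFsm _
  set uxx : ℝ × ℝ → ℂ := fun p => fderiv ℝ ux p (1, 0) with huxxdef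
  set uxt : ℝ × ℝ → ℂ := fun p => fderiv ℝ ux p (0, 1) with huxtdef
  set utx : ℝ × ℝ → ℂ := fun p => fderiv ℝ ut p (1, 0) with hutxdef
  set vt : ℝ × ℝ → ℝ := fun p => fderiv ℝ V p (0, 1) with hvtdef
  have huxxsm : ContDiff ℝ (⊤ : ℕ∞) uxx := contDiffPd ux huxsm _
  have huxtsm : ContDiff ℝ (⊤ : ℕ∞) uxt := contDiffPd ux huxsm _
  have hutxsm : ContDiff ℝ (⊤ : ℕ∞) utx := contDiffPd ut hutsm _
  have hvtsm : ContDiff ℝ (⊤ : ℕ∞) vt := contDiffPd V hVsm _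
  have h1 : ∀ x t, HasDerivAt (fun y => u y t) (ux (x, t)) x := fun x t => hdFst F hFsm x t
  have h2 : ∀ x t, HasDerivAt (fun s => u x s) (ut (x, t)) t := fun x t => hdSnd F hFsm x t
  have h3 : ∀ x t, HasDerivAt (fun y => ux (y, t)) (uxx (x, t)) x := fun x t => hdFst ux huxsm x t
  have h4 : ∀ x t, HasDerivAt (fun s => ux (x, s)) (uxt (x, t)) t := fun x t => hdSnd ux huxsm x t
  have h5 : ∀ x t, HasDerivAt (fun y => ut (y, t)) (utx (x, t)) x := fun x t => hdFst ut hutsm x t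
  have h6 : ∀ x t, HasDerivAt (fun s => v x s) (vt (x, t)) t := fun x t => hdSnd V hVsm x t
  have hsymm : ∀ p : ℝ × ℝ, uxt p = utx p := fun p => pdComm F hFsm p
  -- derivative of ‖u‖²
  have h8 : ∀ x t, HasDerivAt (fun y => ‖u y t‖ ^ 2)
      (2 * ((starRingEnd ℂ) (u x t) * ux (x, t)).re) x := by
    intro x t
    have hm : HasDerivAt (fun y => (starRingEnd ℂ) (u y t) * u y t)
        ((starRingEnd ℂ) (ux (x, t)) * u x t + (starRingEnd ℂ) (u x t) * ux (x, t)) x := by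
      exact ((h1 x t).star.mul (h1 x t))
    have hre := Complex.reCLM.hasFDerivAt.comp_hasDerivAt x hm
    have hfun : (fun y => ‖u y t‖ ^ 2)
        = fun y => Complex.reCLM ((starRingEnd ℂ) (u y t) * u y t) := by
      funext y
      simp [Complex.mul_re, Complex.sq_norm, Complex.normSq_apply]
    rw [hfun]
    refine hre.congr_deriv ?_
    simp [Complex.mul_re]
    ring
  -- hypotheses restated
  have Heq1 : ∀ x t, Complex.I * ut (x, t) + uxx (x, t)
      = u x t * (v x t : ℂ) + (β : ℂ) * (‖u x t‖ : ℂ) ^ 2 * u x t := by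
    intro x t
    have e2 : deriv (fun y => deriv (fun z => u z t) y) x = uxx (x, t) := by
      have hfe : (fun y => deriv (fun z => u z t) y) = fun y => ux (y, t) :=
        funext fun y => (h1 y t).deriv
      rw [hfe]; exact (h3 x t).deriv
    have h := heq1 x t
    rw [(h2 x t).deriv, e2] at h
    exact h
  have Heq2 : ∀ x t, vt (x, t) = 2 * ((starRingEnd ℂ) (u x t) * ux (x, t)).re := by
    intro x t
    have h := heq2 x t
    rw [(h6 x t).deriv, (h8 x t).deriv] at h
    exact h
  -- key functions
  set P : ℝ × ℝ → ℝ := fun p => (V p) ^ 2 + 2 * (F p * (starRingEnd ℂ) (ux p)).im with hPdef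
  set dP : ℝ × ℝ → ℝ := fun p => 2 * V p * vt p
      + 2 * (ut p * (starRingEnd ℂ) (ux p) + F p * (starRingEnd ℂ) (uxt p)).im with hdPdef
  set G : ℝ × ℝ → ℝ := fun p => 2 * ((starRingEnd ℂ) (ux p) * ux p).re
      - β * (((starRingEnd ℂ) (F p) * F p).re) ^ 2
      + 2 * (F p * (starRingEnd ℂ) (ut p)).im with hGdef
  set dG : ℝ × ℝ → ℝ := fun p =>
      2 * ((starRingEnd ℂ) (uxx p) * ux p + (starRingEnd ℂ) (ux p) * uxx p).re
      - 2 * β * ((starRingEnd ℂ) (F p) * F p).re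
          * ((starRingEnd ℂ) (ux p) * F p + (starRingEnd ℂ) (F p) * ux p).re
      + 2 * (ux p * (starRingEnd ℂ) (ut p) + F p * (starRingEnd ℂ) (utx p)).im with hdGdef
  -- time derivative of P
  have hP : ∀ x t, HasDerivAt (fun s => P (x, s)) (dP (x, t)) t := by
    intro x t
    have hv2 : HasDerivAt (fun s => (v x s) ^ 2) (2 * v x t * vt (x, t)) t := by
      have := (h6 x t).pow 2
      refine this.congr_deriv ?_
      ring
    have hz : HasDerivAt (fun s => u x s * (starRingEnd ℂ) (ux (x, s)))
        (ut (x, t) * (starRingEnd ℂ) (ux (x, t)) + u x t * (starRingEnd ℂ) (uxt (x, t))) t := by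
      exact ((h2 x t).mul ((h4 x t).star))
    have him := Complex.imCLM.hasFDerivAt.comp_hasDerivAt t hz
    exact hv2.add (him.const_mul 2)
  -- space derivative of G
  have hG : ∀ x t, HasDerivAt (fun y => G (y, t)) (dG (x, t)) x := by
    intro x t
    have hA : HasDerivAt (fun y => ((starRingEnd ℂ) (ux (y, t)) * ux (y, t)).re)
        (((starRingEnd ℂ) (uxx (x, t)) * ux (x, t)
          + (starRingEnd ℂ) (ux (x, t)) * uxx (x, t)).re) x := by
      have hm : HasDerivAt (fun y => (starRingEnd ℂ) (ux (y, t)) * ux (y, t))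
          ((starRingEnd ℂ) (uxx (x, t)) * ux (x, t)
            + (starRingEnd ℂ) (ux (x, t)) * uxx (x, t)) x := by
        exact ((h3 x t).star.mul (h3 x t))
      exact Complex.reCLM.hasFDerivAt.comp_hasDerivAt x hm
    have hB : HasDerivAt (fun y => ((starRingEnd ℂ) (F (y, t)) * F (y, t)).re)
        (((starRingEnd ℂ) (ux (x, t)) * F (x, t)
          + (starRingEnd ℂ) (F (x, t)) * ux (x, t)).re) x := by
      have hm : HasDerivAt (fun y => (starRingEnd ℂ) (F (y, t)) * F (y, t))
          ((starRingEnd ℂ) (ux (x, t)) * F (x, t) + (starRingEnd ℂ) (F (x, t)) * ux (x, t)) x := by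
        exact ((h1 x t).star.mul (h1 x t))
      exact Complex.reCLM.hasFDerivAt.comp_hasDerivAt x hm
    have hC : HasDerivAt (fun y => (F (y, t) * (starRingEnd ℂ) (ut (y, t))).im)
        ((ux (x, t) * (starRingEnd ℂ) (ut (x, t))
          + F (x, t) * (starRingEnd ℂ) (utx (x, t))).im) x := by
      have hm : HasDerivAt (fun y => F (y, t) * (starRingEnd ℂ) (ut (y, t)))
          (ux (x, t) * (starRingEnd ℂ) (ut (x, t))
            + F (x, t) * (starRingEnd ℂ) (utx (x, t))) x := by
        exact ((h1 x t).mul ((h5 x t).star))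
      exact Complex.imCLM.hasFDerivAt.comp_hasDerivAt x hm
    have := ((hA.const_mul 2).sub ((hB.pow 2).const_mul β)).add (hC.const_mul 2)
    refine this.congr_deriv ?_
    ring
  -- the pointwise identity dP = dG
  have hkey : ∀ x t, dP (x, t) = dG (x, t) := by
    intro x t
    have halg := benneyAlg β (v x t) (vt (x, t)) (u x t) (ux (x, t)) (uxx (x, t)) (ut (x, t))
      (uxt (x, t)) (Heq1 x t) (Heq2 x t)
    show 2 * v x t * vt (x, t)
        + 2 * (ut (x, t) * (starRingEnd ℂ) (ux (x, t))
            + u x t * (starRingEnd ℂ) (uxt (x, t))).im = _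
    rw [halg]
    show _ = 2 * ((starRingEnd ℂ) (uxx (x, t)) * ux (x, t)
          + (starRingEnd ℂ) (ux (x, t)) * uxx (x, t)).re
        - 2 * β * ((starRingEnd ℂ) (u x t) * u x t).re
            * ((starRingEnd ℂ) (ux (x, t)) * u x t + (starRingEnd ℂ) (u x t) * ux (x, t)).re
        + 2 * (ux (x, t) * (starRingEnd ℂ) (ut (x, t))
            + u x t * (starRingEnd ℂ) (utx (x, t))).im
    rw [hsymm (x, t)]
  -- periodicity
  have hutper : ∀ x t, ut (x + 1, t) = ut (x, t) := by
    intro x t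
    have ha := h2 (x + 1) t
    have hfe : (fun s => u (x + 1) s) = fun s => u x s := funext fun s => hu_per x s
    rw [hfe] at ha
    exact ha.unique (h2 x t)
  have huxper : ∀ x t, ux (x + 1, t) = ux (x, t) := by
    intro x t
    have hshift : HasDerivAt (fun y => u (y + 1) t) (ux (x + 1, t)) x :=
      HasDerivAt.comp_add_const x 1 (h1 (x + 1) t)
    have hfe : (fun y : ℝ => u (y + 1) t) = fun y => u y t := funext fun y => hu_per y t
    rw [hfe] at hshift
    exact hshift.unique (h1 x t)
  have hGper : ∀ x t, G (x + 1, t) = G (x, t) := by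
    intro x t
    show 2 * ((starRingEnd ℂ) (ux (x + 1, t)) * ux (x + 1, t)).re
        - β * (((starRingEnd ℂ) (u (x + 1) t) * u (x + 1) t).re) ^ 2
        + 2 * (u (x + 1) t * (starRingEnd ℂ) (ut (x + 1, t))).im = _
    rw [huxper, hutper, hu_per]
    rfl
  -- continuity
  have hdPcont : Continuous dP := by
    apply Continuous.add
    · exact (continuous_const.mul hVsm.continuous).mul hvtsm.continuous
    · exact continuous_const.mul (Complex.continuous_im.comp
        (((hutsm.continuous.mul (continuous_star.comp huxsm.continuous)).add
          (hFsm.continuous.mul (continuous_star.comp huxtsm.continuous)))))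
  have hdGcont : Continuous dG := by
    apply Continuous.add
    apply Continuous.sub
    · exact continuous_const.mul (Complex.continuous_re.comp
        (((continuous_star.comp huxxsm.continuous).mul huxsm.continuous).add
          ((continuous_star.comp huxsm.continuous).mul huxxsm.continuous)))
    · exact ((continuous_const.mul (Complex.continuous_re.comp
        ((continuous_star.comp hFsm.continuous).mul hFsm.continuous))).mul
        (Complex.continuous_re.comp
          (((continuous_star.comp huxsm.continuous).mul hFsm.continuous).add
            ((continuous_star.comp hFsm.continuous).mul huxsm.continuous))))
    · exact continuous_const.mul (Complex.continuous_im.comp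
        ((huxsm.continuous.mul (continuous_star.comp hutsm.continuous)).add
          (hFsm.continuous.mul (continuous_star.comp hutxsm.continuous))))
  have hPcont : Continuous P :=
    (hVsm.continuous.pow 2).add (continuous_const.mul (Complex.continuous_im.comp
      (hFsm.continuous.mul (continuous_star.comp huxsm.continuous))))
  -- inner spatial integral of dP vanishes
  have hinner : ∀ s : ℝ, (∫ x in (0:ℝ)..1, dP (x, s)) = 0 := by
    intro s
    have h0 : (∫ x in (0:ℝ)..1, dP (x, s)) = ∫ x in (0:ℝ)..1, dG (x, s) :=
      intervalIntegral.integral_congr fun x _ => hkey x s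
    have hFTC : (∫ x in (0:ℝ)..1, dG (x, s)) = G (1, s) - G (0, s) :=
      intervalIntegral.integral_eq_sub_of_hasDerivAt (fun x _ => hG x s)
        ((hdGcont.comp (continuous_id.prodMk continuous_const)).intervalIntegrable 0 1)
    have hper : G (1, s) = G (0, s) := by
      have h01 : (1 : ℝ) = 0 + 1 := by norm_num
      rw [h01]; exact hGper 0 s
    rw [h0, hFTC, hper, sub_self]
  -- FTC in time for each x
  have hfx : ∀ x, P (x, T) - P (x, 0) = ∫ s in (0:ℝ)..T, dP (x, s) := by
    intro x
    exact (intervalIntegral.integral_eq_sub_of_hasDerivAt (fun s _ => hP x s)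
      ((hdPcont.comp (continuous_const.prodMk continuous_id)).intervalIntegrable 0 T)).symm
  -- Fubini and conclusion
  have hswap : (∫ x in Set.uIoc (0:ℝ) 1, ∫ s in Set.uIoc (0:ℝ) T, dP (x, s))
      = ∫ s in Set.uIoc (0:ℝ) T, ∫ x in Set.uIoc (0:ℝ) 1, dP (x, s) := by
    apply MeasureTheory.integral_integral_swap
    rw [Measure.prod_restrict]
    apply MeasureTheory.IntegrableOn.mono_set
      (t := Set.uIcc (0:ℝ) 1 ×ˢ Set.uIcc (0:ℝ) T)
    · exact hdPcont.continuousOn.integrableOn_compact (isCompact_uIcc.prod isCompact_uIcc)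
    · exact Set.prod_mono Set.uIoc_subset_uIcc Set.uIoc_subset_uIcc
  have hzero : (∫ x in (0:ℝ)..1, P (x, T)) - (∫ x in (0:ℝ)..1, P (x, 0)) = 0 := by
    have hint1 : IntervalIntegrable (fun x => P (x, T)) volume 0 1 :=
      (hPcont.comp (continuous_id.prodMk continuous_const)).intervalIntegrable 0 1
    have hint0 : IntervalIntegrable (fun x => P (x, 0)) volume 0 1 :=
      (hPcont.comp (continuous_id.prodMk continuous_const)).intervalIntegrable 0 1
    rw [← intervalIntegral.integral_sub hint1 hint0]
    have hcongr : (∫ x in (0:ℝ)..1, (P (x, T) - P (x, 0)))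
        = ∫ x in (0:ℝ)..1, ∫ s in (0:ℝ)..T, dP (x, s) :=
      intervalIntegral.integral_congr fun x _ => hfx x
    rw [hcongr]
    have hsign : ∀ x : ℝ, (∫ s in (0:ℝ)..T, dP (x, s))
        = (if (0:ℝ) ≤ T then (1:ℝ) else -1) • ∫ s in Set.uIoc (0:ℝ) T, dP (x, s) := by
      intro x
      rw [intervalIntegral.intervalIntegral_eq_integral_uIoc]
    rw [intervalIntegral.integral_congr (fun x _ => hsign x)]
    rw [intervalIntegral.integral_smul]
    have h01 : (∫ x in (0:ℝ)..1, ∫ s in Set.uIoc (0:ℝ) T, dP (x, s))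
        = ∫ x in Set.uIoc (0:ℝ) 1, ∫ s in Set.uIoc (0:ℝ) T, dP (x, s) := by
      rw [intervalIntegral.integral_of_le (by norm_num : (0:ℝ) ≤ 1), Set.uIoc_of_le
        (by norm_num : (0:ℝ) ≤ 1)]
    rw [h01, hswap]
    have hin : ∀ s : ℝ, (∫ x in Set.Ioc (0:ℝ) 1, dP (x, s)) = 0 := by
      intro s
      have := hinner s
      rwa [intervalIntegral.integral_of_le (by norm_num : (0:ℝ) ≤ 1)] at this
    simp [hin]
  -- rewrite the goal
  have hEP : ∀ t : ℝ, (∫ x in (0:ℝ)..1,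
      ((v x t) ^ 2 + 2 * (u x t * (starRingEnd ℂ) (deriv (fun y => u y t) x)).im))
      = ∫ x in (0:ℝ)..1, P (x, t) := by
    intro t
    apply intervalIntegral.integral_congr
    intro x _
    show (v x t) ^ 2 + 2 * (u x t * (starRingEnd ℂ) (deriv (fun y => u y t) x)).im = P (x, t)
    rw [(h1 x t).deriv]
    rfl
  rw [hEP T, hEP 0]
  linarith [hzero]
end

section
/- Let r, γ, β, α₁, α₂ ∈ ℝ and N ∈ ℤ. For j = 1, 2 set a_j = α_j (1+N²)^{−r/2} and u_j(t,x) = a_j · exp(iNx) · exp(−it(N² + (γ+β)a_j²)) (these are exact solutions of the Benney system with v_j ≡ γ a_j²). Then for every t ∈ ℝ, ‖u_1(t,·) − u_2(t,·)‖²_{H^r} = (1+N²)^r | a_1 e^{−it(N²+(γ+β)a_1²)} − a_2 e^{−it(N²+(γ+β)a_2²)} |² = | α₁ − α₂ e^{ i t (γ+β)(α₁² − α₂²)(1+N²)^{−r} } |². In particular, if t (γ+β)(α₁² − α₂²)(1+N²)^{−r} = π/2, then ‖u_1(t,·) − u_2(t,·)‖²_{H^r} = α₁² + α₂². -/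
open MeasureTheory Real

/-!
The difference `u₁(t) - u₂(t)` is the single Fourier mode `e^{iNx}` with coefficient `c₁ - c₂`,
so its `H^r` norm is `(1 + N²)^{r/2} |c₁ - c₂|`. Factoring out the common modulus
`(1 + N²)^{-r/2}` and the unimodular phase of `c₁` leaves `α₁ - α₂ e^{iφ}`, where the phase
difference `φ = t (γ + β)(a₁² - a₂²)` is the only trace of the nonlinearity; at `φ = π/2`
this is `α₁ - i α₂`, of squared modulus `α₁² + α₂²`.
-/

section

open Complex

theorem integral_exp_I_mul_int_mul (m : ℤ) :
    ∫ x in (0 : ℝ)..2 * π, exp (I * m * x) = if m = 0 then 2 * π else 0 := by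
  split_ifs with hm
  · simp [hm]
  · have hIm : I * m ≠ 0 := mul_ne_zero I_ne_zero (Int.cast_ne_zero.mpr hm)
    have h_period : exp (I * m * ↑(2 * π)) = 1 := by
      rw [← exp_int_mul_two_pi_mul_I m]
      push_cast
      ring_nf
    rw [integral_exp_mul_complex hIm, h_period]
    simp

theorem one_div_two_pi_mul_integral_const_mul_exp_mul_exp_neg (c : ℂ) (N n : ℤ) :
    1 / (2 * (π : ℂ)) * ∫ x in (0 : ℝ)..2 * π, c * exp (I * N * x) * exp (-I * n * x)
      = if n = N then c else 0 := by
  have h_integrand : ∀ x : ℝ,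
      c * exp (I * N * x) * exp (-I * n * x) = c * exp (I * ↑(N - n) * x) := fun x => by
    rw [mul_assoc, ← Complex.exp_add]
    push_cast
    ring_nf
  simp only [h_integrand, intervalIntegral.integral_const_mul, integral_exp_I_mul_int_mul]
  by_cases hn : n = N
  · subst hn
    field_simp [Real.pi_ne_zero]
    simp [mul_comm]
  · simp [hn, sub_eq_zero, Ne.symm hn]

theorem tsum_mul_norm_sq_ite {α E : Type*} [DecidableEq α] [SeminormedAddCommGroup E]
    (w : α → ℝ) (a : α) (c : E) :
    ∑' n, w n * ‖if n = a then c else 0‖ ^ 2 = w a * ‖c‖ ^ 2 := by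
  rw [tsum_eq_single a fun n hn => by simp [hn]]
  simp

theorem norm_mul_exp_sub_mul_exp (a b : ℂ) (θ₁ θ₂ : ℝ) :
    ‖a * exp (-I * θ₁) - b * exp (-I * θ₂)‖ = ‖a - b * exp (I * ↑(θ₁ - θ₂))‖ := by
  have h_cancel : exp (I * θ₁) * exp (-I * θ₁) = 1 := by
    rw [← Complex.exp_add, ← add_mul, add_neg_cancel, zero_mul, Complex.exp_zero]
  have h_shift : exp (I * θ₁) * exp (-I * θ₂) = exp (I * ↑(θ₁ - θ₂)) := by
    rw [← Complex.exp_add]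
    push_cast
    ring_nf
  have h_rotate : a - b * exp (I * ↑(θ₁ - θ₂))
      = exp (I * θ₁) * (a * exp (-I * θ₁) - b * exp (-I * θ₂)) := by
    linear_combination (-a) * h_cancel + b * h_shift
  rw [h_rotate, norm_mul, norm_exp_I_mul_ofReal, one_mul]

theorem norm_ofReal_sub_ofReal_mul_I_sq (a b : ℝ) : ‖(a : ℂ) - b * I‖ ^ 2 = a ^ 2 + b ^ 2 := by
  rw [Complex.sq_norm, sub_eq_add_neg, ← neg_mul, ← ofReal_neg, normSq_add_mul_I, neg_sq]

theorem rpow_div_two_sq {x : ℝ} (hx : 0 ≤ x) (p : ℝ) : (x ^ (p / 2)) ^ 2 = x ^ p := by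
  rw [← Real.rpow_mul_natCast hx]
  norm_num

/-- `u(t, x) = planeWaveAmplitude γ β t N a * exp (i N x)`, with `v ≡ γ a²`, is an exact
plane-wave solution of the Benney system. -/
noncomputable def planeWaveAmplitude (γ β t : ℝ) (N : ℤ) (a : ℝ) : ℂ :=
  a * exp (-I * t * (N ^ 2 + (γ + β) * a ^ 2))

theorem norm_planeWaveAmplitude_mul_sub (γ β t : ℝ) (N : ℤ) (α₁ α₂ : ℝ) {s : ℝ} (hs : 0 ≤ s) :
    ‖planeWaveAmplitude γ β t N (α₁ * s) - planeWaveAmplitude γ β t N (α₂ * s)‖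
      = s * ‖(α₁ : ℂ) - α₂ * exp (I * t * ↑((γ + β) * (α₁ ^ 2 - α₂ ^ 2) * s ^ 2))‖ := by
  have h_phase (α : ℝ) : planeWaveAmplitude γ β t N (α * s)
      = s * (α * exp (-I * ↑(t * (N ^ 2 + (γ + β) * (α * s) ^ 2)))) := by
    simp only [planeWaveAmplitude]
    push_cast
    ring_nf
  rw [h_phase, h_phase, ← mul_sub, norm_mul, norm_real, Real.norm_of_nonneg hs,
    norm_mul_exp_sub_mul_exp]
  congr 5
  push_cast
  ring

end

/-- Ill-posedness computation: for the exact plane-wave solutions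
`u_j(t,x) = a_j e^{iNx} e^{−it(N² + (γ+β)a_j²)}` with `a_j = α_j (1+N²)^{−r/2}`,
the squared `H^r` norm of the difference at time `t` equals
`(1+N²)^r |a₁ e^{−it(N²+(γ+β)a₁²)} − a₂ e^{−it(N²+(γ+β)a₂²)}|²
 = |α₁ − α₂ e^{it(γ+β)(α₁²−α₂²)(1+N²)^{−r}}|²`; in particular it equals
`α₁² + α₂²` when `t(γ+β)(α₁²−α₂²)(1+N²)^{−r} = π/2`.
Here the `H^r` norm is computed via the Fourier coefficients
`f̂(n) = (1/2π) ∫₀^{2π} f(x) e^{−inx} dx` of the `2π`-periodic difference. -/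
theorem benney_illposedness_computation (r γ β α₁ α₂ : ℝ) (N : ℤ) (a₁ a₂ : ℝ)
    (ha₁ : a₁ = α₁ * (1 + (N : ℝ) ^ 2) ^ (-r / 2))
    (ha₂ : a₂ = α₂ * (1 + (N : ℝ) ^ 2) ^ (-r / 2)) :
    ∀ t : ℝ,
    let c₁ : ℂ := (a₁ : ℂ) *
      Complex.exp (-Complex.I * (t : ℂ) * (((N : ℂ)) ^ 2 + ((γ : ℂ) + (β : ℂ)) * (a₁ : ℂ) ^ 2))
    let c₂ : ℂ := (a₂ : ℂ) *
      Complex.exp (-Complex.I * (t : ℂ) * (((N : ℂ)) ^ 2 + ((γ : ℂ) + (β : ℂ)) * (a₂ : ℂ) ^ 2))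
    let f : ℝ → ℂ := fun x =>
      c₁ * Complex.exp (Complex.I * (N : ℂ) * (x : ℂ))
        - c₂ * Complex.exp (Complex.I * (N : ℂ) * (x : ℂ))
    let fhat : ℤ → ℂ := fun n =>
      (1 / (2 * (π : ℂ))) * ∫ x in (0:ℝ)..(2 * π), f x * Complex.exp (-Complex.I * (n : ℂ) * (x : ℂ))
    ((∑' n : ℤ, (1 + (n : ℝ) ^ 2) ^ r * ‖fhat n‖ ^ 2)
        = (1 + (N : ℝ) ^ 2) ^ r * ‖c₁ - c₂‖ ^ 2)
    ∧ ((1 + (N : ℝ) ^ 2) ^ r * ‖c₁ - c₂‖ ^ 2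
        = ‖(α₁ : ℂ) - (α₂ : ℂ) *
            Complex.exp (Complex.I * (t : ℂ) *
              ((((γ : ℝ) + β) * (α₁ ^ 2 - α₂ ^ 2) * (1 + (N : ℝ) ^ 2) ^ (-r) : ℝ) : ℂ))‖ ^ 2)
    ∧ (t * (γ + β) * (α₁ ^ 2 - α₂ ^ 2) * (1 + (N : ℝ) ^ 2) ^ (-r) = π / 2 →
        (∑' n : ℤ, (1 + (n : ℝ) ^ 2) ^ r * ‖fhat n‖ ^ 2) = α₁ ^ 2 + α₂ ^ 2) := by
  intro t c₁ c₂ f fhat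
  have h_fhat (n : ℤ) : fhat n = if n = N then c₁ - c₂ else 0 := by
    simp only [fhat, f, ← sub_mul]
    exact one_div_two_pi_mul_integral_const_mul_exp_mul_exp_neg (c₁ - c₂) N n
  have h_sum : ∑' n : ℤ, (1 + (n : ℝ) ^ 2) ^ r * ‖fhat n‖ ^ 2
      = (1 + (N : ℝ) ^ 2) ^ r * ‖c₁ - c₂‖ ^ 2 := by
    simp only [h_fhat]
    exact tsum_mul_norm_sq_ite _ N _
  have hx : (0 : ℝ) < 1 + (N : ℝ) ^ 2 := by positivity
  have h_norm : (1 + (N : ℝ) ^ 2) ^ r * ‖c₁ - c₂‖ ^ 2 = ‖(α₁ : ℂ) - (α₂ : ℂ) *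
      Complex.exp (Complex.I * (t : ℂ) *
        ((((γ : ℝ) + β) * (α₁ ^ 2 - α₂ ^ 2) * (1 + (N : ℝ) ^ 2) ^ (-r) : ℝ) : ℂ))‖ ^ 2 := by
    have h_diff : c₁ - c₂ = planeWaveAmplitude γ β t N a₁ - planeWaveAmplitude γ β t N a₂ := rfl
    rw [h_diff, ha₁, ha₂, norm_planeWaveAmplitude_mul_sub γ β t N α₁ α₂ (by positivity),
      mul_pow, rpow_div_two_sq hx.le, ← mul_assoc, ← Real.rpow_add hx, add_neg_cancel,
      Real.rpow_zero, one_mul]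
  refine ⟨h_sum, h_norm, fun h_quarter => ?_⟩
  have h_arg : Complex.I * (t : ℂ) *
      ((((γ : ℝ) + β) * (α₁ ^ 2 - α₂ ^ 2) * (1 + (N : ℝ) ^ 2) ^ (-r) : ℝ) : ℂ)
      = π / 2 * Complex.I := by
    rw [← Complex.ofReal_ofNat, ← Complex.ofReal_div, ← h_quarter]
    push_cast
    ring
  rw [h_sum, h_norm, h_arg, Complex.exp_pi_div_two_mul_I, norm_ofReal_sub_ofReal_mul_I_sq]
end

section
/- Let L > 0, c > 0, δ₁ > 0, δ₂ > 0, and let φ : [0,L] → ℝ be bounded and measurable with M := sup_{x∈[0,L]} |φ(x)| > 0. Then for all real-valued p₁, p₂ ∈ H¹([0,L]) and p₃ ∈ L²([0,L]): δ₁ ‖p₁‖²_{H¹} + δ₂ ‖p₂‖²_{H¹} + (c/2) ∫₀^L ( p₃(x) + (2/c) φ(x) p₁(x) )² dx ≥ δ ( ‖p₁‖²_{H¹} + ‖p₂‖²_{H¹} + ‖p₃‖²_{L²} ), where δ = min{ δ₁/2, δ₂, (δ₁/2)(c/(8M))², c/4 } > 0. (This is the coercivity step in the proof of orbital stability: the two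 cases ‖p₃‖_{L²} ≥ (8M/c)‖p₁‖_{L²} and ‖p₃‖_{L²} ≤ (8M/c)‖p₁‖_{L²} are treated separately.) -/
/-!
Writing `q = p₃ + (2/c) φ p₁`, the pointwise inequality `(a + b)² ≤ 2(a² + b²)` and `|φ| ≤ M` give
`‖p₃‖²_{L²} ≤ 2‖q‖²_{L²} + 8 (M/c)² ‖p₁‖²_{L²}`. Hence `δ‖p₃‖²` is absorbed by the `q`-term (as
`δ ≤ c/4`) and by half of the `δ₁`-term (as `δ ≤ (δ₁/2)(c/(8M))²`), while the other half of the
`δ₁`-term and the `δ₂`-term dominate `δ‖p₁‖²_{H¹}` and `δ‖p₂‖²_{H¹}`. This replaces the case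
distinction of the paper by a single estimate.
-/

open MeasureTheory Set

namespace intervalIntegral

variable {a b : ℝ}

theorem integral_sq_le_two_mul_integral_sq_add {u v : ℝ → ℝ} (hab : a ≤ b)
    (hu : Continuous u) (hv : Continuous v) :
    ∫ x in a..b, u x ^ 2 ≤ 2 * (∫ x in a..b, (u x + v x) ^ 2) + 2 * ∫ x in a..b, v x ^ 2 := by
  rw [← integral_const_mul, ← integral_const_mul,
    ← integral_add (Continuous.intervalIntegrable (by fun_prop) _ _)
      (Continuous.intervalIntegrable (by fun_prop) _ _)]
  refine integral_mono_on hab (Continuous.intervalIntegrable (by fun_prop) _ _)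
    (Continuous.intervalIntegrable (by fun_prop) _ _) fun x _ => ?_
  simpa [← mul_add] using add_sq_le (a := u x + v x) (b := -v x)

theorem integral_mul_sq_le_of_abs_le {ψ f : ℝ → ℝ} {K : ℝ} (hab : a ≤ b)
    (hψ : Continuous ψ) (hf : Continuous f) (hψK : ∀ x ∈ Icc a b, |ψ x| ≤ K) :
    ∫ x in a..b, (ψ x * f x) ^ 2 ≤ K ^ 2 * ∫ x in a..b, f x ^ 2 := by
  rw [← integral_const_mul]
  refine integral_mono_on hab (Continuous.intervalIntegrable (by fun_prop) _ _)
    (Continuous.intervalIntegrable (by fun_prop) _ _) fun x hx => ?_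
  rw [mul_pow, ← sq_abs (ψ x)]
  exact mul_le_mul_of_nonneg_right (pow_le_pow_left₀ (abs_nonneg _) (hψK x hx) 2) (sq_nonneg _)

end intervalIntegral

theorem min_coercivity_mul_le {δ₁ δ₂ c M A₀ A₁ B Q C : ℝ} (hδ₁ : 0 < δ₁) (hδ₂ : 0 < δ₂)
    (hc : 0 < c) (hM : 0 < M) (hA₀ : 0 ≤ A₀) (hA₁ : 0 ≤ A₁) (hB : 0 ≤ B) (hQ : 0 ≤ Q)
    (hC : C ≤ 2 * Q + 2 * (2 * M / c) ^ 2 * A₀) :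
    min (min (δ₁ / 2) δ₂) (min ((δ₁ / 2) * (c / (8 * M)) ^ 2) (c / 4)) * (A₀ + A₁ + B + C)
      ≤ δ₁ * (A₀ + A₁) + δ₂ * B + c / 2 * Q := by
  set δ := min (min (δ₁ / 2) δ₂) (min ((δ₁ / 2) * (c / (8 * M)) ^ 2) (c / 4))
  have hδ : 0 ≤ δ := by positivity
  have hδδ₁ : δ ≤ δ₁ / 2 := (min_le_left _ _).trans (min_le_left _ _)
  have hδδ₂ : δ ≤ δ₂ := (min_le_left _ _).trans (min_le_right _ _)
  have hδc : δ ≤ c / 4 := (min_le_right _ _).trans (min_le_right _ _)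
  have hδM : δ * (2 * (2 * M / c) ^ 2) ≤ δ₁ / 2 := by
    have hδM' : δ ≤ (δ₁ / 2) * (c / (8 * M)) ^ 2 := (min_le_right _ _).trans (min_le_left _ _)
    calc δ * (2 * (2 * M / c) ^ 2) ≤ (δ₁ / 2) * (c / (8 * M)) ^ 2 * (2 * (2 * M / c) ^ 2) :=
          mul_le_mul_of_nonneg_right hδM' (by positivity)
      _ = δ₁ / 16 := by field_simp; ring
      _ ≤ δ₁ / 2 := by linarith
  nlinarith [mul_le_mul_of_nonneg_left hC hδ, mul_le_mul_of_nonneg_right hδc hQ,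
    mul_le_mul_of_nonneg_right hδM hA₀, mul_le_mul_of_nonneg_right hδδ₁ (add_nonneg hA₀ hA₁),
    mul_le_mul_of_nonneg_right hδδ₂ hB]

/-- Coercivity step in the orbital stability proof: with
`δ = min{δ₁/2, δ₂, (δ₁/2)(c/(8M))², c/4}` and `M = sup_{[0,L]} |φ| > 0`,
`δ₁‖p₁‖²_{H¹} + δ₂‖p₂‖²_{H¹} + (c/2)∫₀^L (p₃ + (2/c)φ p₁)² ≥
 δ(‖p₁‖²_{H¹} + ‖p₂‖²_{H¹} + ‖p₃‖²_{L²})`. -/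
theorem stability_coercivity (L c δ₁ δ₂ M : ℝ) (hL : 0 < L) (hc : 0 < c)
    (hδ₁ : 0 < δ₁) (hδ₂ : 0 < δ₂) (φ : ℝ → ℝ) (hφ : Continuous φ)
    (hM : M = sSup ((fun x => |φ x|) '' Set.Icc 0 L)) (hM0 : 0 < M) :
    ∀ p₁ p₂ p₃ : ℝ → ℝ, ContDiff ℝ 1 p₁ → ContDiff ℝ 1 p₂ → Continuous p₃ →
      δ₁ * (∫ x in (0:ℝ)..L, ((p₁ x) ^ 2 + (deriv p₁ x) ^ 2))
        + δ₂ * (∫ x in (0:ℝ)..L, ((p₂ x) ^ 2 + (deriv p₂ x) ^ 2))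
        + (c / 2) * (∫ x in (0:ℝ)..L, (p₃ x + (2 / c) * φ x * p₁ x) ^ 2)
      ≥ min (min (δ₁ / 2) δ₂) (min ((δ₁ / 2) * (c / (8 * M)) ^ 2) (c / 4)) *
          ((∫ x in (0:ℝ)..L, ((p₁ x) ^ 2 + (deriv p₁ x) ^ 2))
            + (∫ x in (0:ℝ)..L, ((p₂ x) ^ 2 + (deriv p₂ x) ^ 2))
            + ∫ x in (0:ℝ)..L, (p₃ x) ^ 2) := by
  intro p₁ p₂ p₃ hp₁ hp₂ hp₃
  have hp₁c : Continuous p₁ := hp₁.continuous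
  have hφM : ∀ x ∈ Icc 0 L, |2 / c * φ x| ≤ 2 * M / c := fun x hx => by
    have hφx : |φ x| ≤ M :=
      hM ▸ le_csSup (isCompact_Icc.bddAbove_image hφ.abs.continuousOn) ⟨x, hx, rfl⟩
    rw [abs_mul, abs_of_pos (by positivity), div_mul_eq_mul_div]
    gcongr
  have hp₃L2 := intervalIntegral.integral_sq_le_two_mul_integral_sq_add hL.le hp₃
    (by fun_prop : Continuous fun x => 2 / c * φ x * p₁ x)
  have hφp₁L2 := intervalIntegral.integral_mul_sq_le_of_abs_le hL.le (by fun_prop) hp₁c hφM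
  have hsq_nonneg (f : ℝ → ℝ) : 0 ≤ ∫ x in (0:ℝ)..L, f x ^ 2 :=
    intervalIntegral.integral_nonneg hL.le fun x _ => sq_nonneg _
  have hd₁ : Continuous (deriv p₁) := hp₁.continuous_deriv le_rfl
  rw [ge_iff_le, intervalIntegral.integral_add (f := fun x => p₁ x ^ 2)
    (Continuous.intervalIntegrable (by fun_prop) _ _) (Continuous.intervalIntegrable (by fun_prop) _ _)]
  refine min_coercivity_mul_le hδ₁ hδ₂ hc hM0 (hsq_nonneg _) (hsq_nonneg _)
    (intervalIntegral.integral_nonneg hL.le fun x _ => by positivity) (hsq_nonneg _) ?_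
  linarith
end

section
/- For every κ ∈ (0,1), with K(κ) = ∫₀¹ dt / √((1−t²)(1−κ²t²)) the complete elliptic integral of the first kind and E(κ) = ∫₀¹ √((1−κ²t²)/(1−t²)) dt the complete elliptic integral of the second kind, one has 0 < (1−κ²) K(κ) / ((2−κ²) E(κ)) < 1/2; equivalently, 0 < 2(1−κ²)K(κ) < (2−κ²)E(κ). -/
open MeasureTheory Real

/-- The complete elliptic integral of the first kind. -/
noncomputable def ellK (κ : ℝ) : ℝ :=
  ∫ t in (0:ℝ)..1, 1 / Real.sqrt ((1 - t ^ 2) * (1 - κ ^ 2 * t ^ 2))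

/-- The complete elliptic integral of the second kind. -/
noncomputable def ellE (κ : ℝ) : ℝ :=
  ∫ t in (0:ℝ)..1, Real.sqrt ((1 - κ ^ 2 * t ^ 2) / (1 - t ^ 2))

/-!
Write `Δ(t) = √((1 - t²)(1 - κ²t²))`. The integrand of `(2 - κ²)E - 2(1 - κ²)K` is
`κ²(1 - (2 - κ²)t²)/Δ`, whose sign changes on `(0, 1)`. Subtracting `κ²` times
`(1 - (2 + 2κ²)t² + 3κ²t⁴)/Δ = (tΔ)'`, which integrates to zero because `tΔ` vanishes
at `0` and `1`, leaves `3κ⁴t²√(1 - t²)/√(1 - κ²t²)`, which is positive on `(0, 1)`.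
Near `t = 1` all integrands are `O((1 - t)^(-1/2))`, hence integrable.
-/

open intervalIntegral Set

lemma one_sub_sq_mul_sq_pos {κ t : ℝ} (hκ : κ ^ 2 ≤ 1) (ht : t ^ 2 < 1) :
    0 < 1 - κ ^ 2 * t ^ 2 :=
  sub_pos.2 (mul_lt_one_of_nonneg_of_lt_one_right hκ (sq_nonneg t) ht)

lemma intervalIntegrable_inv_sqrt_one_sub :
    IntervalIntegrable (fun t : ℝ => (√(1 - t))⁻¹) volume 0 1 := by
  have h := (intervalIntegrable_rpow' (a := 0) (b := 1) (r := -(1 / 2))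
    (by norm_num)).comp_sub_left 1
  norm_num at h
  refine h.symm.congr fun t ht => ?_
  rw [uIoc_of_le zero_le_one] at ht
  rw [rpow_neg (by linarith [ht.2]), ← sqrt_eq_rpow]

lemma IntervalIntegrable.of_norm_le_on_Ioo {f g : ℝ → ℝ} {a b : ℝ} (hab : a ≤ b)
    (hg : IntervalIntegrable g volume a b) (hf : Measurable f)
    (hle : ∀ t ∈ Ioo a b, ‖f t‖ ≤ g t) : IntervalIntegrable f volume a b := by
  refine hg.mono_fun' hf.aestronglyMeasurable ?_
  rw [uIoc_of_le hab, ← restrict_Ioo_eq_restrict_Ioc]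
  exact ae_restrict_of_forall_mem measurableSet_Ioo hle

lemma intervalIntegrable_ellK_integrand {κ : ℝ} (hκ : κ ^ 2 < 1) :
    IntervalIntegrable (fun t : ℝ => 1 / √((1 - t ^ 2) * (1 - κ ^ 2 * t ^ 2))) volume 0 1 := by
  refine .of_norm_le_on_Ioo zero_le_one
    (intervalIntegrable_inv_sqrt_one_sub.const_mul (√(1 - κ ^ 2))⁻¹) (by fun_prop) ?_
  rintro t ⟨ht0, ht1⟩
  have hbound : (1 - κ ^ 2) * (1 - t) ≤ (1 - t ^ 2) * (1 - κ ^ 2 * t ^ 2) := by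
    have hκt : κ ^ 2 * t ^ 2 ≤ 1 := by nlinarith
    nlinarith [mul_nonneg (mul_nonneg (sub_nonneg.2 ht1.le) ht0.le) (sub_nonneg.2 hκt),
      mul_nonneg (mul_nonneg (sub_nonneg.2 ht1.le) (sq_nonneg κ))
        (by nlinarith : (0:ℝ) ≤ 1 - t ^ 2)]
  rw [norm_of_nonneg (by positivity), ← mul_inv, ← sqrt_mul (by linarith), one_div]
  exact inv_anti₀ (sqrt_pos.2 (mul_pos (by linarith) (by linarith))) (sqrt_le_sqrt hbound)

lemma intervalIntegrable_ellE_integrand (κ : ℝ) :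
    IntervalIntegrable (fun t : ℝ => √((1 - κ ^ 2 * t ^ 2) / (1 - t ^ 2))) volume 0 1 := by
  refine .of_norm_le_on_Ioo zero_le_one intervalIntegrable_inv_sqrt_one_sub (by fun_prop) ?_
  rintro t ⟨ht0, ht1⟩
  rw [norm_of_nonneg (sqrt_nonneg _), ← sqrt_inv, ← one_div]
  refine sqrt_le_sqrt (div_le_div₀ zero_le_one ?_ (by linarith) (by nlinarith))
  nlinarith [sq_nonneg (κ * t)]

lemma ellK_pos {κ : ℝ} (hκ : κ ^ 2 < 1) : 0 < ellK κ := by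
  refine intervalIntegral_pos_of_pos_on (intervalIntegrable_ellK_integrand hκ)
    (fun t ⟨ht0, ht1⟩ => ?_) zero_lt_one
  have ht : t ^ 2 < 1 := pow_lt_one₀ ht0.le ht1 two_ne_zero
  have ht' : 0 < 1 - t ^ 2 := sub_pos.2 ht
  have hκt := one_sub_sq_mul_sq_pos hκ.le ht
  positivity

lemma ellE_pos {κ : ℝ} (hκ : κ ^ 2 ≤ 1) : 0 < ellE κ := by
  refine intervalIntegral_pos_of_pos_on (intervalIntegrable_ellE_integrand κ)
    (fun t ⟨ht0, ht1⟩ => ?_) zero_lt_one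
  have ht : t ^ 2 < 1 := pow_lt_one₀ ht0.le ht1 two_ne_zero
  have ht' : 0 < 1 - t ^ 2 := sub_pos.2 ht
  have hκt := one_sub_sq_mul_sq_pos hκ ht
  positivity

lemma hasDerivAt_mul_sqrt_ellK_denom {κ x : ℝ} (hx : 0 < (1 - x ^ 2) * (1 - κ ^ 2 * x ^ 2)) :
    HasDerivAt (fun t : ℝ => t * √((1 - t ^ 2) * (1 - κ ^ 2 * t ^ 2)))
      ((1 - (2 + 2 * κ ^ 2) * x ^ 2 + 3 * κ ^ 2 * x ^ 4)
        / √((1 - x ^ 2) * (1 - κ ^ 2 * x ^ 2))) x := by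
  have hu := ((hasDerivAt_pow 2 x).const_sub 1).mul
    (((hasDerivAt_pow 2 x).const_mul (κ ^ 2)).const_sub 1)
  refine ((hasDerivAt_id' x).mul (hu.sqrt hx.ne')).congr_deriv ?_
  have hs := sq_sqrt hx.le
  have hs0 := (sqrt_pos.2 hx).ne'
  simp only [Pi.mul_apply]
  generalize √((1 - x ^ 2) * (1 - κ ^ 2 * x ^ 2)) = s at hs hs0 ⊢
  field_simp
  linear_combination 2 * hs

lemma intervalIntegrable_quartic_div_sqrt_ellK_denom {κ : ℝ} (hκ : κ ^ 2 < 1) :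
    IntervalIntegrable (fun t : ℝ => (1 - (2 + 2 * κ ^ 2) * t ^ 2 + 3 * κ ^ 2 * t ^ 4)
      / √((1 - t ^ 2) * (1 - κ ^ 2 * t ^ 2))) volume 0 1 := by
  simpa only [mul_one_div] using (intervalIntegrable_ellK_integrand hκ).continuousOn_mul
    (g := fun t : ℝ => 1 - (2 + 2 * κ ^ 2) * t ^ 2 + 3 * κ ^ 2 * t ^ 4) (by fun_prop)

lemma integral_quartic_div_sqrt_ellK_denom_eq_zero {κ : ℝ} (hκ : κ ^ 2 < 1) :
    ∫ t in (0 : ℝ)..1, (1 - (2 + 2 * κ ^ 2) * t ^ 2 + 3 * κ ^ 2 * t ^ 4)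
      / √((1 - t ^ 2) * (1 - κ ^ 2 * t ^ 2)) = 0 := by
  rw [integral_eq_sub_of_hasDerivAt_of_le
    (f := fun t : ℝ => t * √((1 - t ^ 2) * (1 - κ ^ 2 * t ^ 2))) zero_le_one (by fun_prop)
    (fun x ⟨hx0, hx1⟩ => ?_) (intervalIntegrable_quartic_div_sqrt_ellK_denom hκ)]
  · norm_num
  · have hx : x ^ 2 < 1 := pow_lt_one₀ hx0.le hx1 two_ne_zero
    exact hasDerivAt_mul_sqrt_ellK_denom (mul_pos (sub_pos.2 hx) (one_sub_sq_mul_sq_pos hκ.le hx))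

lemma ellE_ellK_integrand_combination_eq {κ t : ℝ} (ht : 0 < 1 - t ^ 2)
    (hκt : 0 < 1 - κ ^ 2 * t ^ 2) :
    (2 - κ ^ 2) * √((1 - κ ^ 2 * t ^ 2) / (1 - t ^ 2))
        - 2 * (1 - κ ^ 2) * (1 / √((1 - t ^ 2) * (1 - κ ^ 2 * t ^ 2)))
      = κ ^ 2 * ((1 - (2 + 2 * κ ^ 2) * t ^ 2 + 3 * κ ^ 2 * t ^ 4)
          / √((1 - t ^ 2) * (1 - κ ^ 2 * t ^ 2)))
        + 3 * κ ^ 4 * (t ^ 2 * √(1 - t ^ 2) / √(1 - κ ^ 2 * t ^ 2)) := by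
  have ha := sq_sqrt ht.le
  have hb := sq_sqrt hκt.le
  have ha0 := (sqrt_pos.2 ht).ne'
  have hb0 := (sqrt_pos.2 hκt).ne'
  rw [sqrt_mul ht.le, sqrt_div hκt.le]
  generalize √(1 - t ^ 2) = a at ha ha0 ⊢
  generalize √(1 - κ ^ 2 * t ^ 2) = b at hb hb0 ⊢
  field_simp
  linear_combination (2 - κ ^ 2) * hb - 3 * κ ^ 4 * t ^ 2 * ha

lemma continuousOn_sq_mul_sqrt_div_sqrt {κ : ℝ} (hκ : κ ^ 2 < 1) :
    ContinuousOn (fun t : ℝ => t ^ 2 * √(1 - t ^ 2) / √(1 - κ ^ 2 * t ^ 2)) (Icc 0 1) := by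
  refine ContinuousOn.div (by fun_prop) (by fun_prop) fun t ⟨ht0, ht1⟩ => (sqrt_pos.2 ?_).ne'
  exact sub_pos.2 (mul_lt_one_of_nonneg_of_lt_one_left (sq_nonneg κ) hκ (pow_le_one₀ ht0 ht1))

lemma integral_sq_mul_sqrt_div_sqrt_pos {κ : ℝ} (hκ : κ ^ 2 < 1) :
    0 < ∫ t in (0 : ℝ)..1, t ^ 2 * √(1 - t ^ 2) / √(1 - κ ^ 2 * t ^ 2) := by
  refine intervalIntegral_pos_of_pos_on
    ((continuousOn_sq_mul_sqrt_div_sqrt hκ).intervalIntegrable_of_Icc zero_le_one)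
    (fun t ⟨ht0, ht1⟩ => ?_) zero_lt_one
  have ht : t ^ 2 < 1 := pow_lt_one₀ ht0.le ht1 two_ne_zero
  have ht' : 0 < 1 - t ^ 2 := sub_pos.2 ht
  have hκt := one_sub_sq_mul_sq_pos hκ.le ht
  positivity

theorem two_sub_sq_mul_ellE_sub_eq {κ : ℝ} (hκ : κ ^ 2 < 1) :
    (2 - κ ^ 2) * ellE κ - 2 * (1 - κ ^ 2) * ellK κ
      = 3 * κ ^ 4 * ∫ t in (0 : ℝ)..1, t ^ 2 * √(1 - t ^ 2) / √(1 - κ ^ 2 * t ^ 2) := by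
  calc (2 - κ ^ 2) * ellE κ - 2 * (1 - κ ^ 2) * ellK κ
      = ∫ t in (0 : ℝ)..1, ((2 - κ ^ 2) * √((1 - κ ^ 2 * t ^ 2) / (1 - t ^ 2))
          - 2 * (1 - κ ^ 2) * (1 / √((1 - t ^ 2) * (1 - κ ^ 2 * t ^ 2)))) := by
        rw [integral_sub ((intervalIntegrable_ellE_integrand κ).const_mul _)
          ((intervalIntegrable_ellK_integrand hκ).const_mul _),
          intervalIntegral.integral_const_mul, intervalIntegral.integral_const_mul]
        rfl
    _ = ∫ t in (0 : ℝ)..1, (κ ^ 2 * ((1 - (2 + 2 * κ ^ 2) * t ^ 2 + 3 * κ ^ 2 * t ^ 4)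
          / √((1 - t ^ 2) * (1 - κ ^ 2 * t ^ 2)))
        + 3 * κ ^ 4 * (t ^ 2 * √(1 - t ^ 2) / √(1 - κ ^ 2 * t ^ 2))) := by
        refine integral_congr_Ioo_of_le zero_le_one fun t ⟨ht0, ht1⟩ => ?_
        have ht : t ^ 2 < 1 := pow_lt_one₀ ht0.le ht1 two_ne_zero
        exact ellE_ellK_integrand_combination_eq (sub_pos.2 ht) (one_sub_sq_mul_sq_pos hκ.le ht)
    _ = 3 * κ ^ 4 * ∫ t in (0 : ℝ)..1, t ^ 2 * √(1 - t ^ 2) / √(1 - κ ^ 2 * t ^ 2) := by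
        have hJ := (continuousOn_sq_mul_sqrt_div_sqrt hκ).intervalIntegrable_of_Icc
          (μ := volume) zero_le_one
        rw [integral_add ((intervalIntegrable_quartic_div_sqrt_ellK_denom hκ).const_mul _)
          (hJ.const_mul _),
          intervalIntegral.integral_const_mul, intervalIntegral.integral_const_mul,
          integral_quartic_div_sqrt_ellK_denom_eq_zero hκ, mul_zero, zero_add]

/-- For every modulus `κ ∈ (0,1)`,
`0 < (1−κ²)K(κ)/((2−κ²)E(κ)) < 1/2`; equivalently `0 < 2(1−κ²)K(κ) < (2−κ²)E(κ)`. -/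
theorem elliptic_integral_ratio_bound (κ : ℝ) (hκ : κ ∈ Set.Ioo (0:ℝ) 1) :
    (0 < (1 - κ ^ 2) * ellK κ / ((2 - κ ^ 2) * ellE κ)
      ∧ (1 - κ ^ 2) * ellK κ / ((2 - κ ^ 2) * ellE κ) < 1 / 2)
    ∧ (0 < 2 * (1 - κ ^ 2) * ellK κ ∧ 2 * (1 - κ ^ 2) * ellK κ < (2 - κ ^ 2) * ellE κ) := by
  obtain ⟨hκ0, hκ1⟩ := hκ
  have hκ2 : κ ^ 2 < 1 := pow_lt_one₀ hκ0.le hκ1 two_ne_zero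
  have hK : 0 < (1 - κ ^ 2) * ellK κ := mul_pos (by linarith) (ellK_pos hκ2)
  have hE : 0 < (2 - κ ^ 2) * ellE κ := mul_pos (by linarith) (ellE_pos hκ2.le)
  have hlt : 2 * (1 - κ ^ 2) * ellK κ < (2 - κ ^ 2) * ellE κ := by
    have hJ := integral_sq_mul_sqrt_div_sqrt_pos hκ2
    rw [← sub_pos, two_sub_sq_mul_ellE_sub_eq hκ2]
    positivity
  refine ⟨⟨div_pos hK hE, ?_⟩, by linarith, hlt⟩
  rw [div_lt_iff₀ hE]
  linarith
end

section
/- Let L > 0 and σ > 2π²/L². For η₂ ∈ (0, √σ) set η₁ = √(2σ − η₂²), κ = √((η₁² − η₂²)/η₁²) ∈ (0,1), and define the period function T(η₂) = 2√2 · K(κ) / η₁, where K is the complete elliptic integral of the first kind. Then there exists a unique η₂ ∈ (0, √σ) such that T(η₂) = L. (This is the existence and uniqueness of the modulus parametrizing the L-periodic dnoidal travelling-wave profile of the Benney system.) -/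
open Real

/-!
Substituting `t = sin θ` turns `K(κ)/η₁` into Gauss's integral
`I(a, b) = ∫₀^{π/2} dθ / √(a cos²θ + b sin²θ)` with `a = η₁² = 2σ - η₂²`, `b = η₂²`, so
`T(η₂) = 2√2 I(2σ - η₂², η₂²)`. Averaging `I(a, b)` with `I(b, a)` shows that `I` decreases
strictly as `a b` grows with `a + b` fixed: the two quadratic forms `a cos²θ + b sin²θ` and
`b cos²θ + a sin²θ` have sum `a + b` and a product increasing in `a b`, and
`1/√x + 1/√y` decreases in `x y` at fixed `x + y`. Hence `T` is strictly decreasing on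
`(0, √σ]`, it is continuous, `T(√σ) = π √2 / √σ < L` exactly when `σ > 2π²/L²`, and
`T(η₂) ≥ log(1 + c/η₂)/c'` blows up as `η₂ → 0⁺`. The intermediate value theorem concludes.
-/

open Set Filter Topology MeasureTheory

theorem ellK_eq_integral_sin (κ : ℝ) :
    ellK κ = ∫ θ in (0:ℝ)..(π / 2), 1 / √(1 - κ ^ 2 * sin θ ^ 2) := by
  have hsub := integral_Icc_deriv_smul_of_deriv_nonneg (a := 0) (b := π / 2) (f := sin)
    (f' := cos) (g := fun t => 1 / √((1 - t ^ 2) * (1 - κ ^ 2 * t ^ 2))) continuousOn_sin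
    (fun θ _ => hasDerivAt_sin θ)
    (fun θ hθ => cos_nonneg_of_mem_Icc ⟨by linarith [hθ.1, pi_pos], hθ.2.le⟩)
    (by positivity)
  rw [sin_zero, sin_pi_div_two] at hsub
  rw [ellK, intervalIntegral.integral_of_le zero_le_one,
    intervalIntegral.integral_of_le (by positivity),
    ← integral_Icc_eq_integral_Ioc, ← hsub, integral_Icc_eq_integral_Ioc,
    integral_Ioc_eq_integral_Ioo, integral_Ioc_eq_integral_Ioo]
  refine setIntegral_congr_fun measurableSet_Ioo fun θ hθ => ?_
  have hcos : 0 < cos θ := cos_pos_of_mem_Ioo ⟨by linarith [hθ.1, pi_pos], hθ.2⟩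
  rw [smul_eq_mul, ← cos_sq', sqrt_mul (sq_nonneg _), sqrt_sq hcos.le, mul_one_div,
    div_mul_cancel_left₀ hcos.ne', one_div]

/-- Gauss's integral `∫₀^{π/2} dθ / √(a cos²θ + b sin²θ) = π / (2 M(√a, √b))`, `M` the
arithmetic-geometric mean. -/
noncomputable def agmIntegral (a b : ℝ) : ℝ :=
  ∫ θ in (0:ℝ)..(π / 2), 1 / √(a * cos θ ^ 2 + b * sin θ ^ 2)

theorem ellK_sqrt_div_sqrt_eq_agmIntegral {a b : ℝ} (ha : 0 < a) (hba : b ≤ a) :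
    ellK √((a - b) / a) / √a = agmIntegral a b := by
  rw [ellK_eq_integral_sin, agmIntegral, ← intervalIntegral.integral_div]
  refine intervalIntegral.integral_congr fun θ _ => ?_
  rw [sq_sqrt (div_nonneg (sub_nonneg.2 hba) ha.le)]
  simp only [div_div, ← sqrt_mul' _ ha.le]
  congr 2
  field_simp
  linear_combination -a * sin_sq_add_cos_sq θ

theorem agmIntegral_comm (a b : ℝ) : agmIntegral a b = agmIntegral b a := by
  have := intervalIntegral.integral_comp_sub_left (a := 0) (b := π / 2)
    (fun θ => 1 / √(a * cos θ ^ 2 + b * sin θ ^ 2)) (π / 2)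
  simp only [sub_self, sub_zero, cos_pi_div_two_sub, sin_pi_div_two_sub] at this
  simp only [agmIntegral, ← this, add_comm]

theorem agmIntegral_self (c : ℝ) : agmIntegral c c = π / (2 * √c) := by
  simp only [agmIntegral, ← mul_add, cos_sq_add_sin_sq, mul_one,
    intervalIntegral.integral_const, smul_eq_mul]
  field_simp
  ring

theorem min_le_mul_cos_sq_add_mul_sin_sq (a b θ : ℝ) :
    min a b ≤ a * cos θ ^ 2 + b * sin θ ^ 2 := by
  calc min a b = min a b * cos θ ^ 2 + min a b * sin θ ^ 2 := by
        rw [← mul_add, cos_sq_add_sin_sq, mul_one]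
    _ ≤ a * cos θ ^ 2 + b * sin θ ^ 2 := by gcongr <;> simp

theorem mul_cos_sq_add_mul_sin_sq_pos {a b : ℝ} (ha : 0 < a) (hb : 0 < b) (θ : ℝ) :
    0 < a * cos θ ^ 2 + b * sin θ ^ 2 :=
  (lt_min ha hb).trans_le (min_le_mul_cos_sq_add_mul_sin_sq a b θ)

theorem continuous_agmIntegrand {a b : ℝ} (ha : 0 < a) (hb : 0 < b) :
    Continuous fun θ => 1 / √(a * cos θ ^ 2 + b * sin θ ^ 2) :=
  continuous_const.div (by fun_prop) fun θ =>
    (sqrt_pos.2 (mul_cos_sq_add_mul_sin_sq_pos ha hb θ)).ne'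

theorem two_mul_agmIntegral {a b : ℝ} (ha : 0 < a) (hb : 0 < b) :
    2 * agmIntegral a b = ∫ θ in (0:ℝ)..(π / 2),
      (1 / √(a * cos θ ^ 2 + b * sin θ ^ 2) + 1 / √(b * cos θ ^ 2 + a * sin θ ^ 2)) := by
  rw [intervalIntegral.integral_add ((continuous_agmIntegrand ha hb).intervalIntegrable _ _)
    ((continuous_agmIntegrand hb ha).intervalIntegrable _ _), ← agmIntegral, ← agmIntegral,
    ← agmIntegral_comm, two_mul]

theorem inv_sqrt_add_inv_sqrt_sq {x y : ℝ} (hx : 0 < x) (hy : 0 < y) :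
    (1 / √x + 1 / √y) ^ 2 = (x + y) / (x * y) + 2 / √(x * y) := by
  rw [add_sq, div_pow, div_pow, sq_sqrt hx.le, sq_sqrt hy.le, sqrt_mul hx.le]
  field_simp
  ring

theorem inv_sqrt_add_inv_sqrt_le {x y x' y' : ℝ} (hx : 0 < x) (hy : 0 < y) (hx' : 0 < x')
    (hy' : 0 < y') (hsum : x + y = x' + y') (hprod : x * y ≤ x' * y') :
    1 / √x' + 1 / √y' ≤ 1 / √x + 1 / √y := by
  rw [← pow_le_pow_iff_left₀ (by positivity) (by positivity) two_ne_zero,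
    inv_sqrt_add_inv_sqrt_sq hx hy, inv_sqrt_add_inv_sqrt_sq hx' hy', hsum]
  gcongr

theorem inv_sqrt_add_inv_sqrt_lt {x y x' y' : ℝ} (hx : 0 < x) (hy : 0 < y) (hx' : 0 < x')
    (hy' : 0 < y') (hsum : x + y = x' + y') (hprod : x * y < x' * y') :
    1 / √x' + 1 / √y' < 1 / √x + 1 / √y := by
  rw [← pow_lt_pow_iff_left₀ (by positivity) (by positivity) two_ne_zero,
    inv_sqrt_add_inv_sqrt_sq hx hy, inv_sqrt_add_inv_sqrt_sq hx' hy', hsum]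
  gcongr

theorem mul_cos_sq_add_mul_sin_sq_add_swap (a b θ : ℝ) :
    (a * cos θ ^ 2 + b * sin θ ^ 2) + (b * cos θ ^ 2 + a * sin θ ^ 2) = a + b := by
  linear_combination (a + b) * cos_sq_add_sin_sq θ

theorem mul_cos_sq_add_mul_sin_sq_mul_swap (a b θ : ℝ) :
    (a * cos θ ^ 2 + b * sin θ ^ 2) * (b * cos θ ^ 2 + a * sin θ ^ 2) =
      a * b * (cos θ ^ 2 - sin θ ^ 2) ^ 2 + (a + b) ^ 2 * (cos θ * sin θ) ^ 2 := by
  ring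

theorem agmIntegral_lt_of_add_eq_of_mul_lt {a b a' b' : ℝ} (ha : 0 < a) (hb : 0 < b)
    (ha' : 0 < a') (hb' : 0 < b') (hsum : a + b = a' + b') (hprod : a * b < a' * b') :
    agmIntegral a' b' < agmIntegral a b := by
  have hQ {a b : ℝ} (ha : 0 < a) (hb : 0 < b) θ := mul_cos_sq_add_mul_sin_sq_pos ha hb θ
  have hQsum (θ : ℝ) :
      (a * cos θ ^ 2 + b * sin θ ^ 2) + (b * cos θ ^ 2 + a * sin θ ^ 2) =
        (a' * cos θ ^ 2 + b' * sin θ ^ 2) + (b' * cos θ ^ 2 + a' * sin θ ^ 2) := by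
    rw [mul_cos_sq_add_mul_sin_sq_add_swap, mul_cos_sq_add_mul_sin_sq_add_swap, hsum]
  rw [← mul_lt_mul_iff_right₀ two_pos, two_mul_agmIntegral ha hb, two_mul_agmIntegral ha' hb']
  refine intervalIntegral.integral_lt_integral_of_continuousOn_of_le_of_exists_lt (by positivity)
    ((continuous_agmIntegrand ha' hb').add (continuous_agmIntegrand hb' ha')).continuousOn
    ((continuous_agmIntegrand ha hb).add (continuous_agmIntegrand hb ha)).continuousOn
    (fun θ _ => ?_) ⟨0, ⟨le_rfl, by positivity⟩, ?_⟩
  · refine inv_sqrt_add_inv_sqrt_le (hQ ha hb θ) (hQ hb ha θ) (hQ ha' hb' θ) (hQ hb' ha' θ)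
      (hQsum θ) ?_
    rw [mul_cos_sq_add_mul_sin_sq_mul_swap, mul_cos_sq_add_mul_sin_sq_mul_swap, hsum]
    gcongr
  · refine inv_sqrt_add_inv_sqrt_lt (hQ ha hb 0) (hQ hb ha 0) (hQ ha' hb' 0) (hQ hb' ha' 0)
      (hQsum 0) ?_
    simpa using hprod

theorem continuousOn_agmIntegral_Ici {m : ℝ} (hm : 0 < m) :
    ContinuousOn (Function.uncurry agmIntegral) (Ici m ×ˢ Ici m) := by
  -- truncating the quadratic form below at `m` changes nothing on `Ici m ×ˢ Ici m`
  -- and makes the integrand jointly continuous everywhere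
  have hcont : Continuous fun p : ℝ × ℝ => ∫ θ in (0:ℝ)..(π / 2),
      1 / √(max (p.1 * cos θ ^ 2 + p.2 * sin θ ^ 2) m) := by
    refine intervalIntegral.continuous_parametric_intervalIntegral_of_continuous'
      (continuous_const.div (by fun_prop) fun q => ?_) _ _
    exact (sqrt_pos.2 (hm.trans_le (le_max_right _ _))).ne'
  refine hcont.continuousOn.congr fun p hp => intervalIntegral.integral_congr fun θ _ => ?_
  have : m ≤ p.1 * cos θ ^ 2 + p.2 * sin θ ^ 2 :=
    (le_min hp.1 hp.2).trans (min_le_mul_cos_sq_add_mul_sin_sq _ _ θ)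
  simp only [max_eq_left this]

theorem continuousOn_agmIntegral :
    ContinuousOn (Function.uncurry agmIntegral) (Ioi 0 ×ˢ Ioi 0) := by
  intro p hp
  have hm : 0 < min p.1 p.2 / 2 := by simpa using hp
  refine ((continuousOn_agmIntegral_Ici hm).continuousAt ?_).continuousWithinAt
  refine prod_mem_nhds (Ici_mem_nhds ?_) (Ici_mem_nhds ?_) <;>
    linarith [min_le_left p.1 p.2, min_le_right p.1 p.2]

theorem integral_one_div_add_mul {p q x : ℝ} (hp : 0 < p) (hq : 0 < q) (hx : 0 ≤ x) :
    ∫ θ in (0:ℝ)..x, 1 / (p + q * θ) = log (1 + q * x / p) / q := by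
  have := intervalIntegral.integral_comp_add_mul (a := 0) (b := x) (fun u => 1 / u) hq.ne' p
  simp only [mul_zero, add_zero] at this
  rw [this, integral_one_div, smul_eq_mul]
  · field_simp
  · rw [uIcc_of_le (by nlinarith)]
    exact fun h => hp.not_ge h.1

theorem log_le_agmIntegral {a b A : ℝ} (ha : 0 < a) (hb : 0 < b) (hA : 0 < A) (haA : a ≤ A) :
    log (1 + √A * (π / 2) / √b) / √A ≤ agmIntegral b a := by
  rw [← integral_one_div_add_mul (sqrt_pos.2 hb) (sqrt_pos.2 hA) (by positivity), agmIntegral]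
  refine intervalIntegral.integral_mono_on (by positivity) ?_
    ((continuous_agmIntegrand hb ha).intervalIntegrable _ _) fun θ hθ => ?_
  · refine ContinuousOn.intervalIntegrable (continuousOn_const.div (by fun_prop) fun θ hθ => ?_)
    rw [uIcc_of_le (by positivity)] at hθ
    have := mul_nonneg (sqrt_nonneg A) hθ.1
    exact (add_pos_of_pos_of_nonneg (sqrt_pos.2 hb) this).ne'
  · -- `b cos²θ + a sin²θ ≤ b + A θ² ≤ (√b + √A θ)²` since `sin θ ≤ θ`
    have hsin : sin θ ^ 2 ≤ θ ^ 2 := by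
      have := sin_le hθ.1
      have := sin_nonneg_of_nonneg_of_le_pi hθ.1 (by linarith [hθ.2, pi_pos])
      gcongr
    have hle : b * cos θ ^ 2 + a * sin θ ^ 2 ≤ (√b + √A * θ) ^ 2 := by
      have := mul_nonneg (mul_nonneg (sqrt_nonneg b) (sqrt_nonneg A)) hθ.1
      nlinarith [sq_sqrt hb.le, sq_sqrt hA.le, cos_sq_le_one θ, sq_nonneg (sin θ),
        mul_le_mul haA hsin (sq_nonneg _) hA.le]
    gcongr
    · exact sqrt_pos.2 (mul_cos_sq_add_mul_sin_sq_pos hb ha θ)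
    · exact (sqrt_le_sqrt hle).trans_eq
        (sqrt_sq (add_nonneg (sqrt_nonneg _) (mul_nonneg (sqrt_nonneg _) hθ.1)))

theorem existsUnique_mem_Ioo_eq_of_strictAntiOn {f : ℝ → ℝ} {a b y : ℝ} (hab : a < b)
    (hanti : StrictAntiOn f (Ioc a b)) (hcont : ContinuousOn f (Ioc a b))
    (hlim : Tendsto f (𝓝[>] a) atTop) (hb : f b < y) :
    ∃! x, x ∈ Ioo a b ∧ f x = y := by
  obtain ⟨x₀, hyx₀, hx₀⟩ := ((hlim.eventually_gt_atTop y).and (Ioo_mem_nhdsGT hab)).exists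
  obtain ⟨x, hx, hfx⟩ := intermediate_value_Icc' hx₀.2.le
    (hcont.mono (Icc_subset_Ioc hx₀.1 le_rfl)) ⟨hb.le, hyx₀.le⟩
  have hxb : x ≠ b := by
    rintro rfl
    exact hb.ne hfx
  refine ⟨x, ⟨⟨hx₀.1.trans_le hx.1, hx.2.lt_of_ne hxb⟩, hfx⟩, fun x' ⟨hx', hfx'⟩ => ?_⟩
  exact hanti.injOn ⟨hx'.1, hx'.2.le⟩ ⟨hx₀.1.trans_le hx.1, hx.2⟩ (hfx'.trans hfx.symm)

theorem strictAntiOn_agmIntegral_sub_sq {σ : ℝ} (hσ : 0 < σ) :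
    StrictAntiOn (fun η => agmIntegral (2 * σ - η ^ 2) (η ^ 2)) (Ioc 0 √σ) := by
  intro η hη η' hη' hlt
  have hη2 : η ^ 2 ≤ σ := (le_sqrt hη.1.le hσ.le).1 hη.2
  have hη2' : η' ^ 2 ≤ σ := (le_sqrt hη'.1.le hσ.le).1 hη'.2
  have hsq : η ^ 2 < η' ^ 2 := by gcongr; exact hη.1.le
  refine agmIntegral_lt_of_add_eq_of_mul_lt (by linarith) (pow_pos hη.1 2)
    (by linarith) (pow_pos hη'.1 2) (by ring) ?_
  nlinarith

theorem continuousOn_agmIntegral_sub_sq {σ : ℝ} (hσ : 0 < σ) :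
    ContinuousOn (fun η => agmIntegral (2 * σ - η ^ 2) (η ^ 2)) (Ioc 0 √σ) := by
  refine continuousOn_agmIntegral.comp (f := fun η => (2 * σ - η ^ 2, η ^ 2))
    (by fun_prop) fun η hη => ⟨?_, pow_pos hη.1 2⟩
  have : η ^ 2 ≤ σ := (le_sqrt hη.1.le hσ.le).1 hη.2
  show 0 < 2 * σ - η ^ 2
  linarith

theorem tendsto_agmIntegral_sub_sq {σ : ℝ} (hσ : 0 < σ) :
    Tendsto (fun η => agmIntegral (2 * σ - η ^ 2) (η ^ 2)) (𝓝[>] 0) atTop := by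
  have hσ2 : 0 < 2 * σ := by positivity
  have hlow :
      Tendsto (fun η => log (1 + √(2 * σ) * (π / 2) * η⁻¹) / √(2 * σ)) (𝓝[>] 0) atTop :=
    (tendsto_log_atTop.comp (tendsto_atTop_add_const_left _ 1
      (tendsto_inv_nhdsGT_zero.const_mul_atTop (by positivity)))).atTop_div_const
      (sqrt_pos.2 hσ2)
  refine tendsto_atTop_mono' _ ?_ hlow
  filter_upwards [Ioo_mem_nhdsGT (sqrt_pos.2 hσ)] with η hη
  have hη2 : η ^ 2 < σ := (lt_sqrt hη.1.le).1 hη.2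
  have := log_le_agmIntegral (a := 2 * σ - η ^ 2) (by linarith) (pow_pos hη.1 2) hσ2
    (by nlinarith)
  rw [sqrt_sq hη.1.le, ← agmIntegral_comm] at this
  rwa [← div_eq_mul_inv]

/-- Existence and uniqueness of the modulus parametrizing the `L`-periodic dnoidal
travelling-wave profile: for `L > 0` and `σ > 2π²/L²`, there is a unique
`η₂ ∈ (0, √σ)` such that, with `η₁ = √(2σ − η₂²)` and `κ = √((η₁² − η₂²)/η₁²)`,
the period `T(η₂) = 2√2 K(κ)/η₁` equals `L`. -/
theorem dnoidal_period_existence_uniqueness (L σ : ℝ) (hL : 0 < L)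
    (hσ : 2 * π ^ 2 / L ^ 2 < σ) :
    ∃! η₂ : ℝ, η₂ ∈ Set.Ioo 0 (Real.sqrt σ) ∧
      2 * Real.sqrt 2 *
          ellK (Real.sqrt (((Real.sqrt (2 * σ - η₂ ^ 2)) ^ 2 - η₂ ^ 2) /
            (Real.sqrt (2 * σ - η₂ ^ 2)) ^ 2)) / Real.sqrt (2 * σ - η₂ ^ 2) = L := by
  have hσ0 : 0 < σ := lt_trans (by positivity) hσ
  have hperiod : ∀ η ∈ Ioo 0 √σ,
      2 * √2 * ellK √((√(2 * σ - η ^ 2) ^ 2 - η ^ 2) / √(2 * σ - η ^ 2) ^ 2) / √(2 * σ - η ^ 2)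
        = 2 * √2 * agmIntegral (2 * σ - η ^ 2) (η ^ 2) := by
    intro η hη
    have hη2 : η ^ 2 < σ := (lt_sqrt hη.1.le).1 hη.2
    rw [sq_sqrt (by linarith), mul_div_assoc,
      ellK_sqrt_div_sqrt_eq_agmIntegral (by linarith) (by linarith)]
  have hend : agmIntegral (2 * σ - √σ ^ 2) (√σ ^ 2) < L / (2 * √2) := by
    rw [sq_sqrt hσ0.le, two_mul, add_sub_cancel_right, agmIntegral_self,
      div_lt_div_iff₀ (by positivity) (by positivity)]
    have h2 : 2 * π ^ 2 < σ * L ^ 2 := (div_lt_iff₀ (by positivity)).1 hσ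
    have : π * √2 < L * √σ := by
      rw [← pow_lt_pow_iff_left₀ (by positivity) (by positivity) two_ne_zero, mul_pow, mul_pow,
        sq_sqrt zero_le_two, sq_sqrt hσ0.le]
      linarith
    linarith
  refine (existsUnique_congr fun η => and_congr_right fun hη => ?_).2
    (existsUnique_mem_Ioo_eq_of_strictAntiOn (sqrt_pos.2 hσ0)
      (strictAntiOn_agmIntegral_sub_sq hσ0) (continuousOn_agmIntegral_sub_sq hσ0)
      (tendsto_agmIntegral_sub_sq hσ0) hend)
  rw [hperiod η hη, eq_div_iff (by positivity), mul_comm]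
end
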